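/- arXiv:2009.06319 — 5 statements merged into one kernel-verified Lean document; each statement's English description precedes it below -/
import Mathlib

section
/- Let A be a symmetric positive-definite 3×3 real matrix with entries A = [[a,b,c],[b,d,e],[c,e,f]], and let S := A⁻¹J(A−I). Then the characteristic polynomial of S equals X³ − (μ_A/det A)·X, where μ_A := af − c² + df − e² − f − det A. (In particular the spectrum of S is {0, λ_A, −λ_A} with λ_A² = μ_A/det A.) -/
open Matrix Polynomial

/-- The Coriolis-type matrix `J`. -/
noncomputable def Jmat : Matrix (Fin 3) (Fin 3) ℝ := !![0, -1, 0; 1, 0, 0; 0, 0, 0]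

/-- For a symmetric positive-definite `A = [[a,b,c],[b,d,e],[c,e,f]]` and
`S := A⁻¹ J (A − 1)`, the characteristic polynomial of `S` is `X³ − (μ_A / det A) X`,
where `μ_A := af − c² + df − e² − f − det A`. -/
theorem charpoly_S (a b c d e f : ℝ) (A : Matrix (Fin 3) (Fin 3) ℝ)
    (hA : A = !![a, b, c; b, d, e; c, e, f]) (hApd : A.PosDef) :
    (A⁻¹ * Jmat * (A - 1)).charpoly =
      X ^ 3 - C ((a * f - c ^ 2 + d * f - e ^ 2 - f - A.det) / A.det) * X := by
  have hdet : A.det ≠ 0 := hApd.det_pos.ne'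
  have hΔ : (!![a, b, c; b, d, e; c, e, f] : Matrix (Fin 3) (Fin 3) ℝ).det
      = a*(d*f-e*e) - b*(b*f-e*c) + c*(b*e-d*c) := by
    rw [Matrix.det_fin_three]; simp; ring
  have hdet' : a*(d*f-e*e) - b*(b*f-e*c) + c*(b*e-d*c) ≠ 0 := by
    rw [← hΔ, ← hA]; exact hdet
  rw [Matrix.inv_def, Ring.inverse_eq_inv']
  rw [Matrix.charpoly, Matrix.det_fin_three]
  simp only [charmatrix_apply, Matrix.smul_mul, Matrix.smul_apply, hA,
    Matrix.adjugate_fin_three, Matrix.mul_apply, Fin.sum_univ_three, Jmat,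
    Matrix.sub_apply, Matrix.one_apply, Matrix.cons_val', Matrix.cons_val_zero,
    Matrix.cons_val_one, Matrix.head_cons, Matrix.head_fin_const, Matrix.of_apply,
    Matrix.cons_val_fin_one, Matrix.empty_val', Matrix.cons_val_two, Matrix.tail_cons,
    Matrix.scalar_apply, Matrix.diagonal_apply, Matrix.map_apply, smul_eq_mul]
  rw [hΔ]
  norm_num [Fin.ext_iff]
  rw [div_eq_mul_inv]
  set G := (a*(d*f-e*e) - b*(b*f-e*c) + c*(b*e-d*c))⁻¹ with hGdef
  have hG' : (C a*(C d*C f-C e*C e) - C b*(C b*C f-C e*C c) + C c*(C b*C e-C d*C c)) * C G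
      = 1 := by
    simpa only [_root_.map_mul, _root_.map_add, _root_.map_sub, _root_.map_one] using
      congrArg C (mul_inv_cancel₀ hdet' : (a*(d*f-e*e) - b*(b*f-e*c) + c*(b*e-d*c)) * G = 1)
  simp only [_root_.map_mul, _root_.map_add, _root_.map_sub, map_pow, map_neg, _root_.map_one]
  linear_combination (-(C G * (C a * C f - C c ^ 2 + C d * C f - C e ^ 2 - C f -
    (C a*(C d*C f-C e*C e) - C b*(C b*C f-C e*C c) + C c*(C b*C e-C d*C c))) * X)) * hG'
end

section
/- Let A be a symmetric positive-definite 3×3 real matrix, S := A⁻¹J(A−I), and let m, m̃, M̃ be the associated symbols. Let φ₀ : ℝ³ → ℂ³ be a Schwartz function with Fourier transform φ̂₀. Define Φ(x,t) := ∫_{ℝ³} M̃(t;ξ) φ̂₀(ξ) e^{2πi ξ·x} dξ. Then Φ(x,0) = φ₀(x) for all x, and for every (x,t) ∈ ℝ³ × ℝ the map t ↦ Φ(x,t) is differentiable with ∂ₜΦ(x,t) = ∫_{ℝ³} m̃(t;ξ) M̃(t;ξ) φ̂₀(ξ) e^{2πi ξ·x} dξ. (This is the Lagrangian form of the linearised semi-geostrophic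 equation.) -/
open Matrix MeasureTheory Real

/-- The matrix `S := A⁻¹ J (A − I)`. -/
noncomputable def Smat (A : Matrix (Fin 3) (Fin 3) ℝ) : Matrix (Fin 3) (Fin 3) ℝ :=
  A⁻¹ * Jmat * (A - 1)

/-- The symbol `m(x) = 2 (x · A⁻¹Jx)/(x · A⁻¹x)` (equal to `0` at `x = 0`). -/
noncomputable def symb (A : Matrix (Fin 3) (Fin 3) ℝ) (x : Fin 3 → ℝ) : ℝ :=
  2 * (x ⬝ᵥ (A⁻¹ * Jmat) *ᵥ x) / (x ⬝ᵥ A⁻¹ *ᵥ x)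

/-- The time-dependent symbol `m̃(t;ξ) := m(e^{−tSᵀ}ξ)`. -/
noncomputable def symbT (A : Matrix (Fin 3) (Fin 3) ℝ) (t : ℝ) (ξ : Fin 3 → ℝ) : ℝ :=
  symb A (NormedSpace.exp ((-t) • (Smat A)ᵀ) *ᵥ ξ)

/-- The symbol `M̃(t;ξ) := exp(∫₀ᵗ m̃(r;ξ) dr)`. -/
noncomputable def symbM (A : Matrix (Fin 3) (Fin 3) ℝ) (t : ℝ) (ξ : Fin 3 → ℝ) : ℝ :=
  Real.exp (∫ r in (0:ℝ)..t, symbT A r ξ)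

/-- The Fourier transform `φ̂(ξ) := ∫ φ(x) e^{−2πi ξ·x} dx` of a vector-valued function. -/
noncomputable def fourierT (φ : (Fin 3 → ℝ) → Fin 3 → ℂ) (ξ : Fin 3 → ℝ) : Fin 3 → ℂ :=
  ∫ x : Fin 3 → ℝ, Complex.exp (-(2 * π * Complex.I * (ξ ⬝ᵥ x))) • φ x

/-- The Lagrangian solution `Φ(x,t) := ∫ M̃(t;ξ) φ̂₀(ξ) e^{2πi ξ·x} dξ`. -/
noncomputable def PhiL (A : Matrix (Fin 3) (Fin 3) ℝ) (φ₀ : SchwartzMap (Fin 3 → ℝ) (Fin 3 → ℂ))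
    (x : Fin 3 → ℝ) (t : ℝ) : Fin 3 → ℂ :=
  ∫ ξ : Fin 3 → ℝ,
    ((symbM A t ξ : ℂ) * Complex.exp (2 * π * Complex.I * (ξ ⬝ᵥ x))) • fourierT (fun y => φ₀ y) ξ

/-!
The symbol `m` is invariant under dilations and continuous away from the origin, hence bounded by
some `C`. Because `e^{-tSᵀ}` is invertible, `t ↦ m̃(t;ξ)` is continuous, so by the fundamental
theorem of calculus `∂ₜM̃ = m̃ M̃`, and `|m̃ M̃| ≤ C e^{C(|t|+1)}` for `s` near `t`. As `φ̂₀` is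
a Schwartz function, hence integrable, this bound dominates the differentiated integrand, and
differentiation under the integral sign gives the formula for `∂ₜΦ`. At `t = 0` we have
`M̃ = 1`, and `Φ(x,0) = φ₀(x)` is Fourier inversion, transported from `EuclideanSpace ℝ (Fin 3)`
to `Fin 3 → ℝ` with the dot product.
-/

open scoped FourierTransform Topology SchwartzMap
open Filter WithLp

section Homogeneous

variable {E F : Type*} [NormedAddCommGroup E] [NormedSpace ℝ E] [FiniteDimensional ℝ E]
  [NormedAddCommGroup F]

theorem exists_norm_le_of_smul_invariant {f : E → F} (hf : ContinuousOn f {0}ᶜ)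
    (hsmul : ∀ c : ℝ, 0 < c → ∀ x, f (c • x) = f x) : ∃ C, ∀ x, ‖f x‖ ≤ C := by
  obtain ⟨C, hC⟩ := (isCompact_sphere (0 : E) 1).exists_bound_of_continuousOn
    (hf.mono fun x hx => Metric.ne_of_mem_sphere hx one_ne_zero)
  refine ⟨max C ‖f 0‖, fun x => ?_⟩
  rcases eq_or_ne x 0 with rfl | hx
  · exact le_max_right _ _
  · have hx' : 0 < ‖x‖ := norm_pos_iff.2 hx
    calc ‖f x‖ = ‖f (‖x‖⁻¹ • x)‖ := by rw [hsmul _ (inv_pos.2 hx')]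
      _ ≤ C := hC _ (by simp [norm_smul, hx'.ne'])
      _ ≤ max C ‖f 0‖ := le_max_left _ _

end Homogeneous

theorem ContinuousOn.aestronglyMeasurable_of_compl_singleton {α β : Type*} [TopologicalSpace α]
    [MeasurableSpace α] [OpensMeasurableSpace α] [MeasurableSingletonClass α]
    [TopologicalSpace β] [SecondCountableTopologyEither α β]
    [TopologicalSpace.PseudoMetrizableSpace β]
    {μ : Measure α} [NullSingletonClass μ] {f : α → β} {a : α} (hf : ContinuousOn f {a}ᶜ) :
    AEStronglyMeasurable f μ := by
  simpa only [restrict_compl_singleton] using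
    hf.aestronglyMeasurable (μ := μ) (measurableSet_singleton a).compl

theorem hasDerivAt_integral_smul_of_deriv_le {α E : Type*} [MeasurableSpace α] {μ : Measure α}
    [NormedAddCommGroup E] [NormedSpace ℝ E] {a a' : ℝ → α → ℝ} {g : α → E} {t K₀ K : ℝ}
    (hg : Integrable g μ) (ha_meas : ∀ᶠ s in 𝓝 t, AEStronglyMeasurable (a s) μ)
    (ha'_meas : AEStronglyMeasurable (a' t) μ) (ha : ∀ s ξ, HasDerivAt (a · ξ) (a' s ξ) s)
    (hat : ∀ ξ, |a t ξ| ≤ K₀) (ha' : ∀ᶠ s in 𝓝 t, ∀ ξ, |a' s ξ| ≤ K) :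
    HasDerivAt (fun s => ∫ ξ, a s ξ • g ξ ∂μ) (∫ ξ, a' t ξ • g ξ ∂μ) t :=
  (hasDerivAt_integral_of_dominated_loc_of_deriv_le (F := fun s ξ => a s ξ • g ξ)
    (F' := fun s ξ => a' s ξ • g ξ) ha'
    (ha_meas.mono fun _ hs => hs.smul hg.1)
    (hg.bdd_smul K₀ ha_meas.self_of_nhds (ae_of_all _ hat))
    (ha'_meas.smul hg.1)
    (ae_of_all _ fun ξ _ hs =>
      (norm_smul _ _).trans_le (mul_le_mul_of_nonneg_right (hs ξ) (norm_nonneg _)))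
    (hg.norm.const_mul K)
    (ae_of_all _ fun ξ s _ => (ha s ξ).smul_const (g ξ))).2

theorem Matrix.exp_mulVec_ne_zero {n : Type*} [Fintype n] [DecidableEq n] (M : Matrix n n ℝ)
    {ξ : n → ℝ} (hξ : ξ ≠ 0) : NormedSpace.exp M *ᵥ ξ ≠ 0 := fun h =>
  hξ (mulVec_injective_iff_isUnit.2 (isUnit_exp M) (h.trans (mulVec_zero _).symm))

theorem Complex.ofReal_mul_smul {E : Type*} [AddCommGroup E] [Module ℂ E] (r : ℝ) (z : ℂ)
    (v : E) : ((r : ℂ) * z) • v = r • z • v := by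
  rw [mul_smul, Complex.coe_smul]

section EuclideanTransport

variable {ι : Type*} [Fintype ι] {E : Type*} [NormedAddCommGroup E] [NormedSpace ℂ E]

theorem fourier_comp_ofLp (f : (ι → ℝ) → E) (ξ : ι → ℝ) :
    𝓕 (fun v : EuclideanSpace ℝ ι => f (ofLp v)) (toLp 2 ξ) =
      ∫ x, Complex.exp (-(2 * π * Complex.I * (ξ ⬝ᵥ x))) • f x := by
  rw [Real.fourier_eq',
    ← (EuclideanSpace.volume_preserving_symm_measurableEquiv_toLp ι).integral_comp']
  congr 1 with v
  simp only [EuclideanSpace.inner_eq_star_dotProduct, star_trivial,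
    MeasurableEquiv.coe_toLp_symm]
  push_cast
  ring_nf

theorem fourierInv_comp_ofLp (f : (ι → ℝ) → E) (x : ι → ℝ) :
    𝓕⁻ (fun v : EuclideanSpace ℝ ι => f (ofLp v)) (toLp 2 x) =
      ∫ ξ, Complex.exp (2 * π * Complex.I * (ξ ⬝ᵥ x)) • f ξ := by
  rw [Real.fourierInv_eq',
    ← (EuclideanSpace.volume_preserving_symm_measurableEquiv_toLp ι).integral_comp']
  congr 1 with v
  simp only [EuclideanSpace.inner_eq_star_dotProduct, star_trivial,
    MeasurableEquiv.coe_toLp_symm, dotProduct_comm x]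
  push_cast
  ring_nf

end EuclideanTransport

noncomputable def SchwartzMap.toEuclidean {ι E : Type*} [Fintype ι] [NormedAddCommGroup E]
    [NormedSpace ℝ E] (φ : 𝓢(ι → ℝ, E)) : 𝓢(EuclideanSpace ℝ ι, E) :=
  SchwartzMap.compCLMOfContinuousLinearEquiv ℝ (EuclideanSpace.equiv ι ℝ) φ

section Symbol

variable {A : Matrix (Fin 3) (Fin 3) ℝ}

theorem symb_smul {c : ℝ} (hc : c ≠ 0) (x : Fin 3 → ℝ) :
    symb A (c • x) = symb A x := by
  simp only [symb, mulVec_smul, smul_dotProduct, dotProduct_smul, smul_eq_mul, ← mul_assoc c]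
  rw [mul_left_comm 2 (c * c), mul_div_mul_left _ _ (mul_ne_zero hc hc)]

theorem continuousOn_symb (hA : A.PosDef) : ContinuousOn (symb A) {0}ᶜ := by
  have hquad (M : Matrix (Fin 3) (Fin 3) ℝ) : Continuous fun x : Fin 3 → ℝ => x ⬝ᵥ M *ᵥ x :=
    continuous_id.dotProduct (continuous_const.matrix_mulVec continuous_id)
  refine (continuous_const.mul (hquad _)).continuousOn.div (hquad _).continuousOn fun x hx => ?_
  simpa using (hA.inv.dotProduct_mulVec_pos hx).ne'

theorem exists_abs_symb_le (hA : A.PosDef) : ∃ C, ∀ x, |symb A x| ≤ C :=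
  exists_norm_le_of_smul_invariant (continuousOn_symb hA) fun _ hc => symb_smul hc.ne'

theorem continuous_symbT (hA : A.PosDef) (ξ : Fin 3 → ℝ) : Continuous fun r => symbT A r ξ := by
  rcases eq_or_ne ξ 0 with rfl | hξ
  · simp only [symbT, mulVec_zero, symb, dotProduct_zero, mul_zero, div_zero]
    exact continuous_const
  · have hexp : Continuous fun r : ℝ => NormedSpace.exp ((-r) • (Smat A)ᵀ) *ᵥ ξ := by
      open scoped Matrix.Norms.Operator in
      exact (NormedSpace.exp_continuous.comp (continuous_neg.smul continuous_const)).matrix_mulVec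
        continuous_const
    exact (continuousOn_symb hA).comp_continuous hexp fun r => exp_mulVec_ne_zero _ hξ

theorem continuousOn_symbT (hA : A.PosDef) (r : ℝ) : ContinuousOn (symbT A r) {0}ᶜ :=
  (continuousOn_symb hA).comp (continuous_const.matrix_mulVec continuous_id).continuousOn
    fun _ hξ => exp_mulVec_ne_zero _ hξ

theorem symbM_zero (ξ : Fin 3 → ℝ) : symbM A 0 ξ = 1 := by
  simp [symbM]

theorem hasDerivAt_symbM (hA : A.PosDef) (ξ : Fin 3 → ℝ) (t : ℝ) :
    HasDerivAt (fun s => symbM A s ξ) (symbT A t ξ * symbM A t ξ) t := by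
  simpa only [symbM, mul_comm] using
    ((continuous_symbT hA ξ).integral_hasStrictDerivAt 0 t).hasDerivAt.exp

theorem abs_symbM_le {C : ℝ} (hC : ∀ x, |symb A x| ≤ C) (t : ℝ) (ξ : Fin 3 → ℝ) :
    |symbM A t ξ| ≤ exp (C * |t|) := by
  rw [symbM, abs_of_pos (exp_pos _), exp_le_exp]
  calc (∫ r in (0 : ℝ)..t, symbT A r ξ) ≤ ‖∫ r in (0 : ℝ)..t, symbT A r ξ‖ := le_abs_self _
    _ ≤ C * |t - 0| := intervalIntegral.norm_integral_le_of_norm_le_const fun r _ => hC _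
    _ = C * |t| := by rw [sub_zero]

theorem continuousOn_symbM (hA : A.PosDef) (t : ℝ) : ContinuousOn (symbM A t) {0}ᶜ := by
  obtain ⟨C, hC⟩ := exists_abs_symb_le hA
  intro ξ hξ
  have hI : ContinuousAt (fun ξ => ∫ r in (0 : ℝ)..t, symbT A r ξ) ξ :=
    intervalIntegral.continuousAt_of_dominated_interval (bound := fun _ => C)
      (Eventually.of_forall fun ξ' => (continuous_symbT hA ξ').aestronglyMeasurable)
      (Eventually.of_forall fun _ => Eventually.of_forall fun _ _ => hC _)
      intervalIntegrable_const
      (Eventually.of_forall fun r _ =>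
        (continuousOn_symbT hA r).continuousAt (isOpen_compl_singleton.mem_nhds hξ))
  exact (continuous_exp.continuousAt.comp hI).continuousWithinAt

end Symbol

section FourierT

variable (φ : 𝓢(Fin 3 → ℝ, Fin 3 → ℂ))

theorem fourierT_ofLp (v : EuclideanSpace ℝ (Fin 3)) :
    fourierT φ (ofLp v) = 𝓕 φ.toEuclidean v := by
  have h := fourier_comp_ofLp (⇑φ) (ofLp v)
  rw [toLp_ofLp] at h
  rw [SchwartzMap.fourier_coe]
  exact h.symm

theorem integrable_fourierT : Integrable (fourierT φ) := by
  have h : fourierT φ = fun ξ => 𝓕 φ.toEuclidean (toLp 2 ξ) :=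
    funext fun ξ => fourierT_ofLp φ (toLp 2 ξ)
  rw [h]
  exact ((PiLp.volume_preserving_toLp (Fin 3)).integrable_comp_emb
    (MeasurableEquiv.toLp 2 _).measurableEmbedding).2 (𝓕 φ.toEuclidean).integrable

theorem integrable_cexp_smul_fourierT (x : Fin 3 → ℝ) :
    Integrable fun ξ => Complex.exp (2 * π * Complex.I * (ξ ⬝ᵥ x)) • fourierT φ ξ := by
  have hcont : Continuous fun ξ : Fin 3 → ℝ => Complex.exp (2 * π * Complex.I * (ξ ⬝ᵥ x)) :=
    Complex.continuous_exp.comp <| continuous_const.mul <|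
      Complex.continuous_ofReal.comp (continuous_id.dotProduct continuous_const)
  refine (integrable_fourierT φ).bdd_smul 1 hcont.aestronglyMeasurable (ae_of_all _ fun ξ => ?_)
  rw [show 2 * π * Complex.I * (ξ ⬝ᵥ x) = ↑(2 * π * (ξ ⬝ᵥ x)) * Complex.I by push_cast; ring,
    Complex.norm_exp_ofReal_mul_I]

theorem integral_cexp_smul_fourierT (x : Fin 3 → ℝ) :
    ∫ ξ, Complex.exp (2 * π * Complex.I * (ξ ⬝ᵥ x)) • fourierT φ ξ = φ x := by
  rw [← fourierInv_comp_ofLp]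
  simp_rw [fourierT_ofLp]
  rw [← SchwartzMap.fourierInv_coe, FourierTransform.fourierInv_fourier_eq]
  rfl

end FourierT

/-- `Φ(x,0) = φ₀(x)` and `∂ₜΦ(x,t) = ∫ m̃(t;ξ) M̃(t;ξ) φ̂₀(ξ) e^{2πi ξ·x} dξ`:
the Lagrangian form of the linearised semi-geostrophic equation. -/
theorem lagrangian_LSG (A : Matrix (Fin 3) (Fin 3) ℝ) (hApd : A.PosDef)
    (φ₀ : SchwartzMap (Fin 3 → ℝ) (Fin 3 → ℂ)) :
    (∀ x : Fin 3 → ℝ, PhiL A φ₀ x 0 = φ₀ x) ∧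
      ∀ x : Fin 3 → ℝ, ∀ t : ℝ,
        HasDerivAt (fun s => PhiL A φ₀ x s)
          (∫ ξ : Fin 3 → ℝ,
            ((symbT A t ξ * symbM A t ξ : ℝ) *
              Complex.exp (2 * π * Complex.I * (ξ ⬝ᵥ x))) • fourierT (fun y => φ₀ y) ξ) t := by
  obtain ⟨C, hC⟩ := exists_abs_symb_le hApd
  have hC0 : 0 ≤ C := (abs_nonneg _).trans (hC 0)
  refine ⟨fun x => ?_, fun x t => ?_⟩
  · simpa [PhiL, symbM_zero] using integral_cexp_smul_fourierT φ₀ x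
  simp only [PhiL, Complex.ofReal_mul_smul]
  refine hasDerivAt_integral_smul_of_deriv_le (integrable_cexp_smul_fourierT φ₀ x)
    (Eventually.of_forall fun s =>
      (continuousOn_symbM hApd s).aestronglyMeasurable_of_compl_singleton)
    ((continuousOn_symbT hApd t).mul
      (continuousOn_symbM hApd t)).aestronglyMeasurable_of_compl_singleton
    (fun s ξ => hasDerivAt_symbM hApd ξ s) (abs_symbM_le hC t) (K := C * exp (C * (|t| + 1))) ?_
  filter_upwards [(continuous_abs.tendsto t).eventually (gt_mem_nhds (lt_add_one |t|))]
    with s hs ξ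
  rw [abs_mul]
  exact mul_le_mul (hC _) ((abs_symbM_le hC s ξ).trans (exp_le_exp.2 (by gcongr)))
    (abs_nonneg _) hC0
end

section
/- Let A be a symmetric positive-definite 3×3 real matrix, S := A⁻¹J(A−I), and m the associated symbol. If k₀ ∈ ℝ³ \ {0} is a real eigenvector of Sᵀ with real eigenvalue λ, i.e. Sᵀk₀ = λ k₀, then m(k₀) = 2λ. -/
open Matrix

/-!
Pair the eigen-equation `Sᵀk = λk` with `y = A⁻¹k`: this gives `k · S A⁻¹ k = λ (k · A⁻¹k)`.
Since `S A⁻¹ = A⁻¹J − A⁻¹JA⁻¹` and `A⁻¹JA⁻¹` is skew-symmetric (a congruence of the skew `J`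
by the symmetric `A⁻¹`), its quadratic form vanishes, leaving `k · A⁻¹Jk = λ (k · A⁻¹k)`.
The denominator `k · A⁻¹k` is positive because `A⁻¹` is positive definite.
-/

namespace Matrix

variable {n R : Type*} [Fintype n]

theorem dotProduct_mulVec_self_eq_zero_of_transpose_eq_neg [CommRing R] [NoZeroDivisors R]
    [CharZero R] {B : Matrix n n R} (hB : Bᵀ = -B) (x : n → R) : x ⬝ᵥ B *ᵥ x = 0 := by
  have h : x ⬝ᵥ B *ᵥ x = -(x ⬝ᵥ B *ᵥ x) := by
    conv_lhs => rw [dotProduct_mulVec, ← mulVec_transpose, hB, neg_mulVec, dotProduct_comm]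
    rw [dotProduct_neg]
  exact CharZero.eq_neg_self_iff.mp h

theorem transpose_mul_mul_transpose_eq_neg [CommRing R] {B : Matrix n n R} (hB : Bᵀ = -B)
    (M : Matrix n n R) : (M * B * Mᵀ)ᵀ = -(M * B * Mᵀ) := by
  rw [transpose_mul, transpose_mul, transpose_transpose, hB, Matrix.neg_mul, Matrix.mul_neg,
    Matrix.mul_assoc]

theorem dotProduct_mulVec_of_transpose_mulVec_eq_smul [CommSemiring R] {S : Matrix n n R}
    {k : n → R} {lam : R} (heig : Sᵀ *ᵥ k = lam • k) (y : n → R) :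
    k ⬝ᵥ S *ᵥ y = lam * (k ⬝ᵥ y) := by
  rw [← smul_eq_mul, ← smul_dotProduct, ← heig, mulVec_transpose, dotProduct_mulVec]

theorem inv_mul_mul_sub_one_mul_inv [DecidableEq n] [CommRing R] {A : Matrix n n R}
    (hA : IsUnit A.det) (J : Matrix n n R) :
    A⁻¹ * J * (A - 1) * A⁻¹ = A⁻¹ * J - A⁻¹ * J * A⁻¹ := by
  rw [Matrix.mul_assoc (A⁻¹ * J), Matrix.sub_mul, Matrix.one_mul, mul_nonsing_inv A hA,
    Matrix.mul_sub, Matrix.mul_one]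

end Matrix

theorem Jmat_transpose : Jmatᵀ = -Jmat := by
  ext i j
  fin_cases i <;> fin_cases j <;> simp [Jmat]

theorem dotProduct_inv_mul_Jmat_mulVec_of_eigenvector {A : Matrix (Fin 3) (Fin 3) ℝ}
    (hA : A.PosDef) {k : Fin 3 → ℝ} {lam : ℝ} (heig : (Smat A)ᵀ *ᵥ k = lam • k) :
    k ⬝ᵥ (A⁻¹ * Jmat) *ᵥ k = lam * (k ⬝ᵥ A⁻¹ *ᵥ k) := by
  have hAinv_symm : (A⁻¹)ᵀ = A⁻¹ :=
    (isHermitian_iff_isSymm.mp hA.isHermitian).inv.eq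
  have hskew : (A⁻¹ * Jmat * A⁻¹)ᵀ = -(A⁻¹ * Jmat * A⁻¹) := by
    simpa only [hAinv_symm] using transpose_mul_mul_transpose_eq_neg Jmat_transpose A⁻¹
  have hSA : Smat A * A⁻¹ = A⁻¹ * Jmat - A⁻¹ * Jmat * A⁻¹ :=
    inv_mul_mul_sub_one_mul_inv (isUnit_iff_ne_zero.mpr hA.det_pos.ne') Jmat
  calc k ⬝ᵥ (A⁻¹ * Jmat) *ᵥ k
      = k ⬝ᵥ (A⁻¹ * Jmat) *ᵥ k - k ⬝ᵥ (A⁻¹ * Jmat * A⁻¹) *ᵥ k := by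
        rw [dotProduct_mulVec_self_eq_zero_of_transpose_eq_neg hskew, sub_zero]
    _ = k ⬝ᵥ Smat A *ᵥ (A⁻¹ *ᵥ k) := by
        rw [mulVec_mulVec, hSA, sub_mulVec, dotProduct_sub]
    _ = lam * (k ⬝ᵥ A⁻¹ *ᵥ k) := dotProduct_mulVec_of_transpose_mulVec_eq_smul heig _

/-- if `k₀ ≠ 0` is a real eigenvector of `Sᵀ` with real eigenvalue `λ`,
then `m(k₀) = 2λ`. -/
theorem symb_eigenvector (A : Matrix (Fin 3) (Fin 3) ℝ) (hApd : A.PosDef)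
    (k₀ : Fin 3 → ℝ) (hk₀ : k₀ ≠ 0) (lam : ℝ) (heig : (Smat A)ᵀ *ᵥ k₀ = lam • k₀) :
    symb A k₀ = 2 * lam := by
  have hden : 0 < k₀ ⬝ᵥ A⁻¹ *ᵥ k₀ := hApd.inv.dotProduct_mulVec_pos hk₀
  rw [symb, dotProduct_inv_mul_Jmat_mulVec_of_eigenvector hApd heig]
  field_simp
end

section
/- Let A be a symmetric positive-definite 3×3 real matrix with μ_A < 0 (elliptic flow), S := A⁻¹J(A−I), and λ := √(−μ_A/det A) > 0. Then the flow generated by S is periodic with period τ := 2π/λ: e^{τS} = I. In particular, for every k₀ ∈ ℝ³ the trajectory t ↦ e^{−tSᵀ}k₀ is τ-periodic and bounded. -/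
open Matrix Real

/-!
`S = A⁻¹ N A` with `N = J B` and `B = I − A⁻¹` symmetric. Since the third row of `J` vanishes
and its upper left block is the rotation `J₂`, `N` is block upper triangular with a traceless upper
left block `J₂ B₂`, so Cayley–Hamilton in dimension two gives `N³ = −(det B₂) N`; for symmetric
`A` one computes `det B₂ = −μ_A / det A = λ²`. Thus `S³ = −λ² S`, and any `x` in a real Banach
algebra with `x³ = −θ² x` satisfies the Rodrigues formula
`exp x = 1 + (sin θ / θ) x + ((1 − cos θ) / θ²) x²`, which is `1` when `θ = 2π`, i.e. for
`x = τ S`. Periodicity and boundedness of the trajectories follow from `exp (τ S) = 1`.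
-/

open Nat in
theorem NormedSpace.exp_eq_of_pow_three_eq_neg_sq_smul {𝔸 : Type*} [NormedRing 𝔸]
    [NormedAlgebra ℝ 𝔸] [CompleteSpace 𝔸] {x : 𝔸} {θ : ℝ} (hθ : θ ≠ 0)
    (hx : x ^ 3 = -(θ ^ 2 • x)) :
    exp x = 1 + (sin θ / θ) • x + ((1 - cos θ) / θ ^ 2) • x ^ 2 := by
  have hodd (k : ℕ) : x ^ (2 * k + 1) = (-θ ^ 2) ^ k • x := by
    induction k with
    | zero => simp
    | succ k ih =>
      rw [show 2 * (k + 1) + 1 = 2 * k + 1 + 2 by ring, pow_add, ih, smul_mul_assoc,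
        ← pow_succ' x 2, hx]
      module
  have heven (k : ℕ) : x ^ (2 * k + 2) = (-θ ^ 2) ^ k • x ^ 2 := by
    rw [pow_succ, hodd, smul_mul_assoc, ← sq]
  have hsin : HasSum (fun k : ℕ => ((2 * k + 1)! : ℝ)⁻¹ • x ^ (2 * k + 1)) ((sin θ / θ) • x) := by
    convert ((Real.hasSum_sin θ).div_const θ).smul_const x using 2 with k
    rw [hodd, smul_smul]
    congr 1
    rw [neg_pow, ← pow_mul, pow_succ]
    field_simp
  have hcos : HasSum (fun k : ℕ => ((2 * k + 2)! : ℝ)⁻¹ • x ^ (2 * k + 2))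
      (((1 - cos θ) / θ ^ 2) • x ^ 2) := by
    have h := (hasSum_nat_add_iff' 1).2 (Real.hasSum_cos θ)
    convert (h.neg.div_const (θ ^ 2)).smul_const (x ^ 2) using 2 with k
    · rw [heven, smul_smul]
      congr 1
      rw [neg_pow, ← pow_mul, Nat.mul_add_one, pow_add]
      field_simp
      ring
    · simp
  have h := ((hasSum_nat_add_iff (f := fun n ↦ (n ! : ℝ)⁻¹ • x ^ n) 1).1
    (hsin.even_add_odd hcos)).unique (exp_series_hasSum_exp' x)
  rw [← h, Finset.sum_range_one, factorial_zero, cast_one, inv_one, one_smul, pow_zero, add_comm,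
    ← add_assoc]

section MatrixExp

variable {n : Type*} [Fintype n] [DecidableEq n]

theorem Matrix.exp_eq_one_of_pow_three_eq {M : Matrix n n ℝ} (hM : M ^ 3 = -((2 * π) ^ 2 • M)) :
    NormedSpace.exp M = 1 := by
  let _ := Matrix.linftyOpNormedRing (n := n) (α := ℝ)
  let _ := Matrix.linftyOpNormedAlgebra (n := n) (R := ℝ) (α := ℝ)
  have h := NormedSpace.exp_eq_of_pow_three_eq_neg_sq_smul two_pi_pos.ne' hM
  rwa [sin_two_pi, cos_two_pi, sub_self, zero_div, zero_div, zero_smul, zero_smul, add_zero,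
    add_zero] at h

theorem Matrix.periodic_exp_smul {M : Matrix n n ℝ} {τ : ℝ} (h : NormedSpace.exp (τ • M) = 1) :
    Function.Periodic (fun t : ℝ => NormedSpace.exp (t • M)) τ := fun t => by
  dsimp only
  rw [add_smul, exp_add_of_commute _ _ (((Commute.refl M).smul_left t).smul_right τ), h, mul_one]

theorem Matrix.continuous_exp_smul (M : Matrix n n ℝ) :
    Continuous fun t : ℝ => NormedSpace.exp (t • M) := by
  let _ := Matrix.linftyOpNormedRing (n := n) (α := ℝ)
  let _ := Matrix.linftyOpNormedAlgebra (n := n) (R := ℝ) (α := ℝ)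
  let _ : NormedAlgebra ℚ (Matrix n n ℝ) := .restrictScalars ℚ ℝ _
  exact NormedSpace.exp_continuous.comp (continuous_id.smul continuous_const)

theorem Matrix.exp_smul_neg_transpose_eq_one {M : Matrix n n ℝ} {τ : ℝ}
    (h : NormedSpace.exp (τ • M) = 1) : NormedSpace.exp (τ • -Mᵀ) = 1 := by
  rw [smul_neg, ← transpose_smul, ← transpose_neg, exp_transpose, Matrix.exp_neg, h, inv_one,
    transpose_one]

end MatrixExp

theorem Jmat_mul_pow_three {B : Matrix (Fin 3) (Fin 3) ℝ} (hB : B 0 1 = B 1 0) :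
    (Jmat * B) ^ 3 = -(B 0 0 * B 1 1 - B 0 1 * B 1 0) • (Jmat * B) := by
  rw [B.eta_fin_three, hB, Jmat]
  simp only [pow_succ, pow_zero, one_mul, mul_fin_three, smul_of, smul_cons, smul_empty]
  ext i j
  fin_cases i <;> fin_cases j <;>
    simp only [Fin.zero_eta, Fin.mk_one, Fin.reduceFinMk, of_apply, cons_val', cons_val,
      cons_val_zero, cons_val_one, cons_val_fin_one, smul_eq_mul] <;> ring

theorem Smat_eq_conj {A : Matrix (Fin 3) (Fin 3) ℝ} (hA : IsUnit A.det) :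
    Smat A = A⁻¹ * (Jmat * (1 - A⁻¹)) * A := by
  rw [Smat, mul_assoc, mul_assoc, mul_assoc, sub_mul, one_mul, nonsing_inv_mul A hA]

theorem Smat_pow_three {A : Matrix (Fin 3) (Fin 3) ℝ} (hA : IsUnit A.det) (hsymm : A.IsSymm) :
    Smat A ^ 3 =
      -((1 - A⁻¹) 0 0 * (1 - A⁻¹) 1 1 - (1 - A⁻¹) 0 1 * (1 - A⁻¹) 1 0) • Smat A := by
  have hB : (1 - A⁻¹) 0 1 = (1 - A⁻¹) 1 0 := by
    simpa using (hsymm.inv.apply 0 1).symm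
  have hconj : (A⁻¹ * (Jmat * (1 - A⁻¹)) * A) ^ 3 = A⁻¹ * (Jmat * (1 - A⁻¹)) ^ 3 * A :=
    Units.conj_pow' (A.nonsingInvUnit hA) _ 3
  rw [Smat_eq_conj hA, hconj, Jmat_mul_pow_three hB, mul_smul_comm, smul_mul_assoc]

theorem one_sub_inv_minor_eq {A : Matrix (Fin 3) (Fin 3) ℝ} {a b c d e f : ℝ}
    (hA : A = !![a, b, c; b, d, e; c, e, f]) (hdet : A.det ≠ 0) :
    (1 - A⁻¹) 0 0 * (1 - A⁻¹) 1 1 - (1 - A⁻¹) 0 1 * (1 - A⁻¹) 1 0 =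
      -(a * f - c ^ 2 + d * f - e ^ 2 - f - A.det) / A.det := by
  have hD : A.det = a * d * f - a * e ^ 2 - b ^ 2 * f + 2 * b * c * e - c ^ 2 * d := by
    rw [hA, det_fin_three]
    simp only [of_apply, cons_val', cons_val_zero, cons_val_fin_one, cons_val_one, cons_val]
    ring
  rw [inv_def, Ring.inverse_eq_inv', hA, adjugate_fin_three_of, ← hA]
  simp only [smul_of, smul_cons, smul_eq_mul, smul_empty, Matrix.sub_apply, one_apply,
    of_apply, cons_val', cons_val_zero, cons_val_fin_one, cons_val_one, Fin.isValue, ↓reduceIte,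
    zero_ne_one, one_ne_zero]
  field_simp
  rw [hD]
  ring

/-- in the elliptic case `μ_A < 0`, with `λ := √(−μ_A/det A) > 0` and
`τ := 2π/λ`, the flow generated by `S` is `τ`-periodic: `e^{τS} = I`; in particular every
frequency trajectory `t ↦ e^{−tSᵀ}k₀` is `τ`-periodic and bounded. -/
theorem elliptic_periodicity (a b c d e f : ℝ) (A : Matrix (Fin 3) (Fin 3) ℝ)
    (hA : A = !![a, b, c; b, d, e; c, e, f]) (hApd : A.PosDef)
    (μ : ℝ) (hμ : μ = a * f - c ^ 2 + d * f - e ^ 2 - f - A.det) (hμneg : μ < 0)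
    (lam τ : ℝ) (hlam : lam = Real.sqrt (-μ / A.det)) (hτ : τ = 2 * π / lam) :
    0 < lam ∧
    NormedSpace.exp (τ • Smat A) = 1 ∧
    ∀ k₀ : Fin 3 → ℝ,
      Function.Periodic (fun t : ℝ => NormedSpace.exp ((-t) • (Smat A)ᵀ) *ᵥ k₀) τ ∧
      ∃ C : ℝ, ∀ t : ℝ, ‖NormedSpace.exp ((-t) • (Smat A)ᵀ) *ᵥ k₀‖ ≤ C := by
  have hdet : 0 < A.det := hApd.det_pos
  have hratio : 0 < -μ / A.det := div_pos (neg_pos.2 hμneg) hdet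
  have hlam_pos : 0 < lam := hlam ▸ sqrt_pos.2 hratio
  have hS : Smat A ^ 3 = -(lam ^ 2 • Smat A) := by
    rw [Smat_pow_three hdet.ne'.isUnit (isHermitian_iff_isSymm.1 hApd.isHermitian),
      one_sub_inv_minor_eq hA hdet.ne', ← hμ, hlam, sq_sqrt hratio.le, ← neg_smul]
  have hexp : NormedSpace.exp (τ • Smat A) = 1 := by
    refine exp_eq_one_of_pow_three_eq ?_
    rw [smul_pow, hS, smul_neg, smul_smul, smul_smul, hτ]
    field_simp
  refine ⟨hlam_pos, hexp, fun k₀ => ?_⟩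
  have htraj (t : ℝ) : (-t) • (Smat A)ᵀ = t • -(Smat A)ᵀ := by rw [neg_smul, smul_neg]
  simp only [htraj]
  have hper := (periodic_exp_smul (exp_smul_neg_transpose_eq_one hexp)).comp (· *ᵥ k₀)
  obtain ⟨C, hC⟩ := (hper.isBounded_of_continuous (hτ ▸ by positivity)
    ((continuous_exp_smul _).matrix_mulVec continuous_const)).exists_norm_le
  exact ⟨hper, C, fun t => hC _ ⟨t, rfl⟩⟩
end

section
/- Let A be a symmetric positive-definite 3×3 real matrix with entries A = [[a,b,c],[b,d,e],[c,e,f]], let N > 0, B := diag(1,1,N²), and M := J(A−B). Then the characteristic polynomial of M equals X³ − μ_QG·X, where μ_QG := b² − (a−1)(d−1). (In particular the spectrum of M is {0, √μ_QG, −√μ_QG} when μ_QG > 0, and {0, i√(−μ_QG), −i√(−μ_QG)} when μ_QG < 0.) -/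
open Matrix Polynomial

/-- for a symmetric positive-definite `A = [[a,b,c],[b,d,e],[c,e,f]]`, `N > 0`,
`B := diag(1,1,N²)` and `M := J(A − B)`, the characteristic polynomial of `M` is
`X³ − μ_QG X` where `μ_QG := b² − (a−1)(d−1)`. -/
theorem charpoly_M_QG (a b c d e f N : ℝ) (hN : 0 < N)
    (A : Matrix (Fin 3) (Fin 3) ℝ)
    (hA : A = !![a, b, c; b, d, e; c, e, f]) (hApd : A.PosDef)
    (B : Matrix (Fin 3) (Fin 3) ℝ) (hB : B = Matrix.diagonal ![1, 1, N ^ 2]) :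
    (Jmat * (A - B)).charpoly =
      X ^ 3 - C (b ^ 2 - (a - 1) * (d - 1)) * X := by
  subst hA hB
  have hM : Jmat * (!![a, b, c; b, d, e; c, e, f] - Matrix.diagonal ![1, 1, N ^ 2]) =
      !![-b, -(d-1), -e; a-1, b, c; 0, 0, 0] := by
    have hdiag : Matrix.diagonal ![1, 1, N ^ 2] = !![(1:ℝ),0,0;0,1,0;0,0,N^2] := by
      ext i j; fin_cases i <;> fin_cases j <;> rfl
    rw [hdiag, Jmat]
    ext i j; fin_cases i <;> fin_cases j <;>
      simp [Matrix.mul_apply, Fin.sum_univ_succ] <;> ring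
  rw [hM, Matrix.charpoly, Matrix.det_fin_three]
  simp [charmatrix_apply, Matrix.one_apply]
  ring
end
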